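/- arXiv:2211.01273 — 3 statements merged into one kernel-verified Lean document; each statement's English description precedes it below -/
import Mathlib

section
/- On the curve of purely imaginary roots of the characteristic equation, Re((dλ/dτ)⁻¹) evaluated at λ = iν± has the same sign as ±√((a² + 2ω² − (γ+a)²)² − 4ω⁴): it is positive at ν₊ and negative at ν₋. -/
/-!
Eliminating `e^{λτ}` with the characteristic equation, `e^{λτ} P(λ) = -s a λ` where
`P(λ) = λ² - (γ+a)λ + ω²`, and using `s² = 1` collapses `(dλ/dτ)⁻¹` to
`(ω² - λ²)/(λ² P(λ)) - τ/λ`. At `λ = iν` the term `τ/λ` is purely imaginary and `λ² P(λ)`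
has real part `ν²(ν² - ω²)`, so the real part is `(ν⁴ - ω⁴)/(ν² |P(iν)|²)`, of the sign of
`ν² - ω²`. Finally `ν₊²` and `ν₋²` are the two positive roots of `X² - AX + ω⁴` with
`A = a² + 2ω² - (γ+a)²`; their product is `ω⁴`, so `ν₋² < ω² < ν₊²`.
-/

noncomputable def hkbNuPlus (γ a ω : ℝ) : ℝ :=
  Real.sqrt ((a^2 + 2*ω^2 - (γ+a)^2
    + Real.sqrt ((a^2 + 2*ω^2 - (γ+a)^2)^2 - 4*ω^4)) / 2)

noncomputable def hkbNuMinus (γ a ω : ℝ) : ℝ :=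
  Real.sqrt ((a^2 + 2*ω^2 - (γ+a)^2
    - Real.sqrt ((a^2 + 2*ω^2 - (γ+a)^2)^2 - 4*ω^4)) / 2)

open Complex

theorem quadratic_ne_zero_of_charEq {s a c q τ l : ℂ} (hs : s ≠ 0) (ha : a ≠ 0)
    (hl : l ≠ 0)
    (H : l ^ 2 - c * l + q + s * a * l * exp (-l * τ) = 0) : l ^ 2 - c * l + q ≠ 0 := by
  intro hP
  rw [hP, zero_add] at H
  simp_all [exp_ne_zero]

theorem inv_deriv_eq_of_charEq {s a c q τ l : ℂ} (hs : s ^ 2 = 1) (ha : a ≠ 0) (hl : l ≠ 0)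
    (H : l ^ 2 - c * l + q + s * a * l * exp (-l * τ) = 0) :
    (s * (2 * l - c) * exp (l * τ) + a) / (a * l ^ 2) - τ / l
      = (q - l ^ 2) / (l ^ 2 * (l ^ 2 - c * l + q)) - τ / l := by
  have hP := quadratic_ne_zero_of_charEq (left_ne_zero_of_mul_eq_one (sq s ▸ hs)) ha hl H
  have hexp : exp (l * τ) * (l ^ 2 - c * l + q) = -(s * a * l) := by
    have hone : exp (l * τ) * exp (-l * τ) = 1 := by rw [← exp_add]; simp
    linear_combination exp (l * τ) * H - s * a * l * hone
  congr 1
  rw [div_eq_div_iff (by positivity) (by positivity)]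
  linear_combination (l ^ 2 * s * (2 * l - c)) * hexp - a * l ^ 3 * (2 * l - c) * hs

theorem re_inv_deriv_at_imaginary (c ω τ ν : ℝ) :
    (((ω : ℂ) ^ 2 - (I * ν) ^ 2)
        / ((I * ν) ^ 2 * ((I * ν) ^ 2 - c * (I * ν) + (ω : ℂ) ^ 2)) - τ / (I * ν)).re
      = (ν ^ 2 - ω ^ 2) * (ν ^ 2 + ω ^ 2)
        / (ν ^ 2 * ((ω ^ 2 - ν ^ 2) ^ 2 + c ^ 2 * ν ^ 2)) := by
  have hnum : (ω : ℂ) ^ 2 - (I * ν) ^ 2 = ((ω ^ 2 + ν ^ 2 : ℝ) : ℂ) := by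
    push_cast; ring_nf; simp [I_sq]
  have hden : (I * ν) ^ 2 * ((I * ν) ^ 2 - c * (I * ν) + (ω : ℂ) ^ 2)
      = ((ν ^ 2 * (ν ^ 2 - ω ^ 2) : ℝ) : ℂ) + ((c * ν ^ 3 : ℝ) : ℂ) * I := by
    push_cast; ring_nf; simp [I_sq, I_pow_four, pow_three, I_mul_I]; ring
  have hτ : ((τ : ℂ) / (I * ν)).re = 0 := by simp [div_re]
  rw [hnum, hden, sub_re, hτ, sub_zero, div_re, normSq_add_mul_I]
  simp only [ofReal_re, ofReal_im, add_re, add_im, mul_re, mul_im, I_re, I_im, mul_zero,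
    zero_mul, mul_one, sub_zero, add_zero, zero_add, zero_div]
  rcases eq_or_ne ν 0 with rfl | hν
  · simp
  rw [show (ν ^ 2 * (ν ^ 2 - ω ^ 2)) ^ 2 + (c * ν ^ 3) ^ 2
      = ν ^ 2 * (ν ^ 2 * ((ω ^ 2 - ν ^ 2) ^ 2 + c ^ 2 * ν ^ 2)) by ring,
    show (ω ^ 2 + ν ^ 2) * (ν ^ 2 * (ν ^ 2 - ω ^ 2))
      = ν ^ 2 * ((ν ^ 2 - ω ^ 2) * (ν ^ 2 + ω ^ 2)) by ring,
    mul_div_mul_left _ _ (pow_ne_zero 2 hν)]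

theorem re_inv_deriv_eq_of_charEq {γ a ω s τ ν : ℝ} (ha : a ≠ 0) (hs : s ^ 2 = 1)
    (hν : ν ≠ 0)
    (H : (I * ν) ^ 2 - ((γ : ℂ) + a) * (I * ν) + (ω : ℂ) ^ 2
      + s * a * (I * ν) * exp (-(I * ν) * τ) = 0) :
    ((s * (2 * (I * ν) - ((γ : ℂ) + a)) * exp ((I * ν) * τ) + a) / (a * (I * ν) ^ 2)
      - τ / (I * ν)).re
      = (ν ^ 2 - ω ^ 2) * (ν ^ 2 + ω ^ 2)
        / (ν ^ 2 * ((ω ^ 2 - ν ^ 2) ^ 2 + (γ + a) ^ 2 * ν ^ 2)) := by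
  have hsC : (s : ℂ) ^ 2 = 1 := by exact_mod_cast hs
  rw [inv_deriv_eq_of_charEq hsC (ofReal_ne_zero.mpr ha) (by simpa using hν) H,
    ← ofReal_add, re_inv_deriv_at_imaginary]

theorem re_inv_deriv_pos {γ a ω s τ ν : ℝ} (ha : a ≠ 0) (hs : s ^ 2 = 1)
    (hν : ω ^ 2 < ν ^ 2)
    (H : (I * ν) ^ 2 - ((γ : ℂ) + a) * (I * ν) + (ω : ℂ) ^ 2
      + s * a * (I * ν) * exp (-(I * ν) * τ) = 0) :
    0 < ((s * (2 * (I * ν) - ((γ : ℂ) + a)) * exp ((I * ν) * τ) + a) / (a * (I * ν) ^ 2)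
      - τ / (I * ν)).re := by
  have hν0 : ν ≠ 0 := by rintro rfl; nlinarith [sq_nonneg ω]
  rw [re_inv_deriv_eq_of_charEq ha hs hν0 H]
  have hgap : 0 < (ω ^ 2 - ν ^ 2) ^ 2 := by nlinarith
  apply div_pos <;>
    nlinarith [sq_nonneg ω, sq_nonneg ((γ + a) * ν), sq_pos_of_ne_zero hν0]

theorem re_inv_deriv_neg {γ a ω s τ ν : ℝ} (ha : a ≠ 0) (hs : s ^ 2 = 1) (hν0 : ν ≠ 0)
    (hν : ν ^ 2 < ω ^ 2)
    (H : (I * ν) ^ 2 - ((γ : ℂ) + a) * (I * ν) + (ω : ℂ) ^ 2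
      + s * a * (I * ν) * exp (-(I * ν) * τ) = 0) :
    ((s * (2 * (I * ν) - ((γ : ℂ) + a)) * exp ((I * ν) * τ) + a) / (a * (I * ν) ^ 2)
      - τ / (I * ν)).re < 0 := by
  rw [re_inv_deriv_eq_of_charEq ha hs hν0 H]
  have hgap : 0 < (ω ^ 2 - ν ^ 2) ^ 2 := by nlinarith
  apply div_neg_of_neg_of_pos <;>
    nlinarith [sq_nonneg ω, sq_nonneg ((γ + a) * ν), sq_pos_of_ne_zero hν0]

theorem two_mul_sq_lt_of_four_mul_pow_four_lt {A ω : ℝ} (hA : 0 < A) (hS : 4 * ω ^ 4 < A ^ 2) :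
    2 * ω ^ 2 < A := by
  nlinarith [sq_nonneg ω]

theorem sq_lt_add_sqrt_discr_div_two {A ω : ℝ} (hA : 2 * ω ^ 2 < A) :
    ω ^ 2 < (A + √(A ^ 2 - 4 * ω ^ 4)) / 2 := by
  linarith [Real.sqrt_nonneg (A ^ 2 - 4 * ω ^ 4)]

theorem sub_sqrt_discr_div_two_pos {A ω : ℝ} (hω : 0 < ω) (hA : 0 < A) :
    0 < (A - √(A ^ 2 - 4 * ω ^ 4)) / 2 := by
  have : √(A ^ 2 - 4 * ω ^ 4) < A := (Real.sqrt_lt' hA).mpr (by linarith [pow_pos hω 4])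
  linarith

theorem sub_sqrt_discr_div_two_lt_sq {A ω : ℝ} (hω : 0 < ω) (hA : 2 * ω ^ 2 < A) :
    (A - √(A ^ 2 - 4 * ω ^ 4)) / 2 < ω ^ 2 := by
  have : A - 2 * ω ^ 2 < √(A ^ 2 - 4 * ω ^ 4) :=
    (Real.lt_sqrt (by linarith)).mpr (by nlinarith [pow_pos hω 2])
  linarith

theorem hkbNuMinus_pos {γ a ω : ℝ} (hω : 0 < ω) (hA : 0 < a ^ 2 + 2 * ω ^ 2 - (γ + a) ^ 2) :
    0 < hkbNuMinus γ a ω :=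
  Real.sqrt_pos.mpr (sub_sqrt_discr_div_two_pos hω hA)

theorem hkb_crossing_direction_general (γ a ω s τp τm : ℝ) (hω : 0 < ω) (ha : a ≠ 0)
    (hs : s = 1 ∨ s = -1)
    (hA : 0 < a^2 + 2*ω^2 - (γ+a)^2)
    (hS : 4*ω^4 < (a^2 + 2*ω^2 - (γ+a)^2)^2) :
    ((Complex.I * (hkbNuPlus γ a ω : ℂ))^2
        - ((γ : ℂ) + (a : ℂ)) * (Complex.I * (hkbNuPlus γ a ω : ℂ)) + (ω : ℂ)^2
        + (s : ℂ) * (a : ℂ) * (Complex.I * (hkbNuPlus γ a ω : ℂ)) *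
          Complex.exp (-(Complex.I * (hkbNuPlus γ a ω : ℂ)) * (τp : ℂ)) = 0 →
      0 < (((s : ℂ) * (2 * (Complex.I * (hkbNuPlus γ a ω : ℂ)) - ((γ : ℂ) + (a : ℂ))) *
            Complex.exp ((Complex.I * (hkbNuPlus γ a ω : ℂ)) * (τp : ℂ)) + (a : ℂ)) /
            ((a : ℂ) * (Complex.I * (hkbNuPlus γ a ω : ℂ))^2)
          - (τp : ℂ) / (Complex.I * (hkbNuPlus γ a ω : ℂ))).re) ∧
    ((Complex.I * (hkbNuMinus γ a ω : ℂ))^2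
        - ((γ : ℂ) + (a : ℂ)) * (Complex.I * (hkbNuMinus γ a ω : ℂ)) + (ω : ℂ)^2
        + (s : ℂ) * (a : ℂ) * (Complex.I * (hkbNuMinus γ a ω : ℂ)) *
          Complex.exp (-(Complex.I * (hkbNuMinus γ a ω : ℂ)) * (τm : ℂ)) = 0 →
      (((s : ℂ) * (2 * (Complex.I * (hkbNuMinus γ a ω : ℂ)) - ((γ : ℂ) + (a : ℂ))) *
            Complex.exp ((Complex.I * (hkbNuMinus γ a ω : ℂ)) * (τm : ℂ)) + (a : ℂ)) /
            ((a : ℂ) * (Complex.I * (hkbNuMinus γ a ω : ℂ))^2)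
          - (τm : ℂ) / (Complex.I * (hkbNuMinus γ a ω : ℂ))).re < 0) := by
  have hs2 : s ^ 2 = 1 := by rcases hs with rfl | rfl <;> norm_num
  have hA2 : 2 * ω ^ 2 < a ^ 2 + 2 * ω ^ 2 - (γ + a) ^ 2 :=
    two_mul_sq_lt_of_four_mul_pow_four_lt hA hS
  constructor
  · refine fun H => re_inv_deriv_pos ha hs2 ?_ H
    have hlt := sq_lt_add_sqrt_discr_div_two hA2
    rwa [hkbNuPlus, Real.sq_sqrt ((sq_nonneg ω).trans hlt.le)]
  · refine fun H => re_inv_deriv_neg ha hs2 (hkbNuMinus_pos hω hA).ne' ?_ H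
    rw [hkbNuMinus, Real.sq_sqrt (sub_sqrt_discr_div_two_pos hω hA).le]
    exact sub_sqrt_discr_div_two_lt_sq hω hA2

/-- On the curves of purely imaginary roots of
`D(λ,τ) = λ² − (γ+a)λ + ω² + s·aλe^{−λτ} = 0`, the real part of
`(dλ/dτ)⁻¹ = (s(2λ−(γ+a))e^{λτ} + a)/(aλ²) − τ/λ` is positive at `λ = iν₊`
and negative at `λ = iν₋`. -/
theorem hkb_crossing_direction (γ a ω s τp τm : ℝ) (hω : 0 < ω) (ha : a ≠ 0)
    (hs : s = 1 ∨ s = -1) (hτp : 0 ≤ τp) (hτm : 0 ≤ τm)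
    (hA : 0 < a^2 + 2*ω^2 - (γ+a)^2)
    (hS : 4*ω^4 < (a^2 + 2*ω^2 - (γ+a)^2)^2) :
    ((Complex.I * (hkbNuPlus γ a ω : ℂ))^2
        - ((γ : ℂ) + (a : ℂ)) * (Complex.I * (hkbNuPlus γ a ω : ℂ)) + (ω : ℂ)^2
        + (s : ℂ) * (a : ℂ) * (Complex.I * (hkbNuPlus γ a ω : ℂ)) *
          Complex.exp (-(Complex.I * (hkbNuPlus γ a ω : ℂ)) * (τp : ℂ)) = 0 →
      0 < (((s : ℂ) * (2 * (Complex.I * (hkbNuPlus γ a ω : ℂ)) - ((γ : ℂ) + (a : ℂ))) *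
            Complex.exp ((Complex.I * (hkbNuPlus γ a ω : ℂ)) * (τp : ℂ)) + (a : ℂ)) /
            ((a : ℂ) * (Complex.I * (hkbNuPlus γ a ω : ℂ))^2)
          - (τp : ℂ) / (Complex.I * (hkbNuPlus γ a ω : ℂ))).re) ∧
    ((Complex.I * (hkbNuMinus γ a ω : ℂ))^2
        - ((γ : ℂ) + (a : ℂ)) * (Complex.I * (hkbNuMinus γ a ω : ℂ)) + (ω : ℂ)^2
        + (s : ℂ) * (a : ℂ) * (Complex.I * (hkbNuMinus γ a ω : ℂ)) *
          Complex.exp (-(Complex.I * (hkbNuMinus γ a ω : ℂ)) * (τm : ℂ)) = 0 →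
      (((s : ℂ) * (2 * (Complex.I * (hkbNuMinus γ a ω : ℂ)) - ((γ : ℂ) + (a : ℂ))) *
            Complex.exp ((Complex.I * (hkbNuMinus γ a ω : ℂ)) * (τm : ℂ)) + (a : ℂ)) /
            ((a : ℂ) * (Complex.I * (hkbNuMinus γ a ω : ℂ))^2)
          - (τm : ℂ) / (Complex.I * (hkbNuMinus γ a ω : ℂ))).re < 0) :=
  hkb_crossing_direction_general γ a ω s τp τm hω ha hs hA hS
end

section
/- For ν with ντ ≠ kπ for all integers k, the pair (a, γ) for which iν is a root of the characteristic equation is given by a = ±(ν² − ω²)/(ν sin(ντ)) and γ = ((ν² − ω²)/(ν sin(ντ)))(cos(ντ) ∓ 1). -/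
/-! With `c = (ν² − ω²)/(ν sin(ντ))` the substitution reads `a = t c` and `γ = c (cos(ντ) − t)`,
and both equations become multiples of `t² − 1`. -/

theorem hkb_gamma_a_parameterisation_general (ω τ ν t a γ : ℝ)
    (hν : 0 < ν) (ht : t = 1 ∨ t = -1) (hsin : Real.sin (ν*τ) ≠ 0)
    (ha : a = t * (ν^2 - ω^2) / (ν * Real.sin (ν*τ)))
    (hγ : γ = (ν^2 - ω^2) / (ν * Real.sin (ν*τ)) * (Real.cos (ν*τ) - t)) :
    ω^2 - ν^2 + t * a * ν * Real.sin (ν*τ) = 0 ∧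
    -(γ + a) + t * a * Real.cos (ν*τ) = 0 := by
  have ht_sq : t ^ 2 = 1 := sq_eq_one_iff.mpr ht
  set c := (ν^2 - ω^2) / (ν * Real.sin (ν*τ)) with hc
  have ha_c : a = t * c := by rw [ha, hc, mul_div_assoc]
  have hc_mul : c * (ν * Real.sin (ν*τ)) = ν^2 - ω^2 :=
    div_mul_cancel₀ _ (mul_ne_zero hν.ne' hsin)
  constructor
  · linear_combination (ν^2 - ω^2) * ht_sq + t ^ 2 * hc_mul + t * ν * Real.sin (ν*τ) * ha_c
  · linear_combination c * Real.cos (ν*τ) * ht_sq - hγ + (t * Real.cos (ν*τ) - 1) * ha_c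

/-- For `ν` with `sin(ντ) ≠ 0`, substituting
`a = ±(ν² − ω²)/(ν sin(ντ))` and `γ = ((ν² − ω²)/(ν sin(ντ)))(cos(ντ) ∓ 1)`
makes both the real part equation `ω² − ν² ± aν sin(ντ) = 0` and the imaginary
part equation `−(γ+a) ± a cos(ντ) = 0` hold. -/
theorem hkb_gamma_a_parameterisation (ω τ ν t a γ : ℝ) (hω : 0 < ω) (hτ : 0 < τ)
    (hν : 0 < ν) (ht : t = 1 ∨ t = -1) (hsin : Real.sin (ν*τ) ≠ 0)
    (ha : a = t * (ν^2 - ω^2) / (ν * Real.sin (ν*τ)))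
    (hγ : γ = (ν^2 - ω^2) / (ν * Real.sin (ν*τ)) * (Real.cos (ν*τ) - t)) :
    ω^2 - ν^2 + t * a * ν * Real.sin (ν*τ) = 0 ∧
    -(γ + a) + t * a * Real.cos (ν*τ) = 0 :=
  hkb_gamma_a_parameterisation_general ω τ ν t a γ hν ht hsin ha hγ
end

section
/- With ξ := 1 + ω²/ν² − (γ+a)τ, along the parameterised curve a(ν), γ(ν) of purely imaginary roots one has da/dγ = ξ / ((γ/a)ξ − aτ sin²(ντ)); consequently, for a ≠ 0, da/dγ = 0 if and only if ξ = 0. -/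
/-!
Both curves are built from `r(ν) = (ν² − ω²)/(ν sin(ντ))`: `a = t r` and `γ = r (cos(ντ) − t)`
with `t = ±1`. Since `γ + a = r cos(ντ)`, the quotient rule gives `r' = ξ / sin(ντ)`, hence
`a' = t ξ / sin(ντ)` and `γ' = (cos(ντ) − t) ξ / sin(ντ) − r τ sin(ντ)`. Dividing and using
`t² = 1` (so that `r = t a`) gives the formula.
-/

open Real

noncomputable def crossingFactor (ω τ ν : ℝ) : ℝ := (ν ^ 2 - ω ^ 2) / (ν * sin (ν * τ))

theorem hasDerivAt_crossingFactor {ω τ ν : ℝ} (hs : sin (ν * τ) ≠ 0) :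
    HasDerivAt (crossingFactor ω τ)
      ((1 + ω ^ 2 / ν ^ 2 - crossingFactor ω τ ν * cos (ν * τ) * τ) / sin (ν * τ)) ν := by
  have hν : ν ≠ 0 := by rintro rfl; simp at hs
  have hsin : HasDerivAt (fun x => sin (x * τ)) (cos (ν * τ) * τ) ν :=
    ((hasDerivAt_id ν).mul_const τ).sin.congr_deriv (by simp)
  have h := ((hasDerivAt_pow 2 ν).sub_const (ω ^ 2)).fun_div
    ((hasDerivAt_id' (x := ν)).fun_mul hsin) (mul_ne_zero hν hs)
  refine h.congr_deriv ?_
  simp only [crossingFactor]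
  field_simp
  ring

theorem div_eq_div_of_sq_eq_one {t r s c τ ξ : ℝ} (ht : t ^ 2 = 1) (hs : s ≠ 0) (hr : r ≠ 0) :
    t * (ξ / s) / (ξ / s * (c - t) + r * (-s * τ)) =
      ξ / (r * (c - t) / (t * r) * ξ - t * r * τ * s ^ 2) := by
  have ht0 : t ≠ 0 := by rintro rfl; norm_num at ht
  set D := ξ * (c - t) - r * τ * s ^ 2
  have hL : ξ / s * (c - t) + r * (-s * τ) = D / s := by field_simp; ring
  have hR : r * (c - t) / (t * r) * ξ - t * r * τ * s ^ 2 = D / t := by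
    field_simp
    linear_combination (-(r * τ * s ^ 2)) * ht
  rw [hL, hR, ← mul_div_assoc, div_div_div_cancel_right₀ hs, div_div_eq_mul_div, mul_comm]

theorem hkb_da_dgamma_general (ω τ t : ℝ)
    (ht : t = 1 ∨ t = -1) (aF gF : ℝ → ℝ)
    (haF : aF = fun ν => t * (ν^2 - ω^2) / (ν * Real.sin (ν*τ)))
    (hgF : gF = fun ν => (ν^2 - ω^2) / (ν * Real.sin (ν*τ)) * (Real.cos (ν*τ) - t))
    (ν : ℝ) (hsin : Real.sin (ν*τ) ≠ 0) (ha : aF ν ≠ 0)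
    (ξ : ℝ) (hξ : ξ = 1 + ω^2/ν^2 - (gF ν + aF ν)*τ)
    (hden : (gF ν / aF ν) * ξ - aF ν * τ * (Real.sin (ν*τ))^2 ≠ 0) :
    deriv aF ν / deriv gF ν = ξ / ((gF ν / aF ν) * ξ - aF ν * τ * (Real.sin (ν*τ))^2) ∧
    (deriv aF ν / deriv gF ν = 0 ↔ ξ = 0) := by
  set r := crossingFactor ω τ
  have haF_eq : aF = fun x => t * r x := by simp only [haF, r, crossingFactor, mul_div_assoc]
  have hgF_eq : gF = fun x => r x * (cos (x * τ) - t) := hgF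
  have hξ_eq : ξ = 1 + ω ^ 2 / ν ^ 2 - r ν * cos (ν * τ) * τ := by
    rw [hξ, haF_eq, hgF_eq]; ring
  have hr := hasDerivAt_crossingFactor (ω := ω) hsin
  rw [← hξ_eq] at hr
  have hA : HasDerivAt aF (t * (ξ / sin (ν * τ))) ν := haF_eq ▸ hr.const_mul t
  have hG : HasDerivAt gF (ξ / sin (ν * τ) * (cos (ν * τ) - t) + r ν * (-sin (ν * τ) * τ)) ν :=
    hgF_eq ▸ hr.mul ((((hasDerivAt_id ν).mul_const τ).cos.congr_deriv (by simp)).sub_const t)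
  have hr0 : r ν ≠ 0 := right_ne_zero_of_mul (haF_eq ▸ ha)
  have main : deriv aF ν / deriv gF ν =
      ξ / ((gF ν / aF ν) * ξ - aF ν * τ * (Real.sin (ν*τ))^2) := by
    rw [hA.deriv, hG.deriv, haF_eq, hgF_eq]
    exact div_eq_div_of_sq_eq_one (by rcases ht with rfl | rfl <;> norm_num) hsin hr0
  exact ⟨main, by rw [main, div_eq_zero_iff, or_iff_left hden]⟩

/-- With `ξ = 1 + ω²/ν² − (γ+a)τ`, along the parameterised curve
`a(ν), γ(ν)` of purely imaginary roots one has
`da/dγ = ξ / ((γ/a)ξ − aτ sin²(ντ))`; consequently, `da/dγ = 0 ↔ ξ = 0`. -/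
theorem hkb_da_dgamma (ω τ t : ℝ) (hω : 0 < ω) (hτ : 0 < τ)
    (ht : t = 1 ∨ t = -1) (aF gF : ℝ → ℝ)
    (haF : aF = fun ν => t * (ν^2 - ω^2) / (ν * Real.sin (ν*τ)))
    (hgF : gF = fun ν => (ν^2 - ω^2) / (ν * Real.sin (ν*τ)) * (Real.cos (ν*τ) - t))
    (ν : ℝ) (hν : 0 < ν) (hsin : Real.sin (ν*τ) ≠ 0) (ha : aF ν ≠ 0)
    (ξ : ℝ) (hξ : ξ = 1 + ω^2/ν^2 - (gF ν + aF ν)*τ)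
    (hden : (gF ν / aF ν) * ξ - aF ν * τ * (Real.sin (ν*τ))^2 ≠ 0) :
    deriv aF ν / deriv gF ν = ξ / ((gF ν / aF ν) * ξ - aF ν * τ * (Real.sin (ν*τ))^2) ∧
    (deriv aF ν / deriv gF ν = 0 ↔ ξ = 0) :=
  hkb_da_dgamma_general ω τ t ht aF gF haF hgF ν hsin ha ξ hξ hden
end
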